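/- Gaussian Poincaré inequality on proper domains: if Ω ⊂ R^n is open with γ(Ω) < 1, then there exists a constant C_Ω > 0 such that ∫_Ω u^2 dγ ≤ C_Ω ∫_Ω |∇u|^2 dγ for all u ∈ H^1_0(Ω, γ). -/

import Mathlib

open MeasureTheory Real ENNReal

noncomputable def gaussianMeasure (n : ℕ) : Measure (EuclideanSpace ℝ (Fin n)) :=
  volume.withDensity (fun x => ENNReal.ofReal ((2 * π) ^ (-(n : ℝ) / 2) * Real.exp (-‖x‖ ^ 2 / 2)))

namespace GPAux

noncomputable def rho (n : ℕ) (x : EuclideanSpace ℝ (Fin n)) : ℝ :=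
  (2 * π) ^ (-(n : ℝ) / 2) * Real.exp (-‖x‖ ^ 2 / 2)

lemma gaussianMeasure_eq (n : ℕ) :
    gaussianMeasure n = volume.withDensity (fun x => ENNReal.ofReal (rho n x)) := rfl

lemma rho_continuous (n : ℕ) : Continuous (rho n) := by
  unfold rho
  fun_prop

lemma rho_pos (n : ℕ) (x : EuclideanSpace ℝ (Fin n)) : 0 < rho n x := by
  unfold rho
  positivity

lemma integrable_exp_norm_sq (n : ℕ) {b : ℝ} (hb : 0 < b) :
    Integrable (fun x : EuclideanSpace ℝ (Fin n) => Real.exp (-b * ‖x‖ ^ 2)) := by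
  have h := (GaussianFourier.integrable_cexp_neg_mul_sq_norm_add (V := EuclideanSpace ℝ (Fin n))
    (b := (b : ℂ)) (by simpa using hb) 0 0).re
  refine h.congr (Filter.Eventually.of_forall fun x => ?_)
  simp [Complex.exp_ofReal_re, ← Complex.ofReal_pow, ← Complex.ofReal_neg, ← Complex.ofReal_mul,
    ← Complex.ofReal_exp]

lemma integral_exp_norm_sq (n : ℕ) {b : ℝ} (hb : 0 < b) :
    ∫ x : EuclideanSpace ℝ (Fin n), Real.exp (-b * ‖x‖ ^ 2) = (π / b) ^ ((n : ℝ) / 2) := by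
  rw [GaussianFourier.integral_rexp_neg_mul_sq_norm hb]
  simp [finrank_euclideanSpace_fin]

lemma integrable_rho (n : ℕ) : Integrable (rho n) := by
  unfold rho
  refine ((integrable_exp_norm_sq n (b := 1/2) (by norm_num)).const_mul
    ((2 * π) ^ (-(n:ℝ) / 2))).congr (Filter.Eventually.of_forall fun x => ?_)
  show (2 * π) ^ (-(n:ℝ) / 2) * rexp (-(1/2) * ‖x‖^2) = _
  rw [show -(1/2 : ℝ) * ‖x‖^2 = -‖x‖^2/2 by ring]

lemma integral_rho (n : ℕ) : ∫ x, rho n x = 1 := by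
  unfold rho
  rw [MeasureTheory.integral_const_mul]
  have : ∀ x : EuclideanSpace ℝ (Fin n), Real.exp (-‖x‖ ^ 2 / 2)
      = Real.exp (-(1/2) * ‖x‖ ^ 2) := by intro x; ring_nf
  simp_rw [this]
  rw [integral_exp_norm_sq n (by norm_num)]
  have h2π : (0:ℝ) < 2 * π := by positivity
  rw [show π / (1/2 : ℝ) = 2 * π by ring]
  rw [← Real.rpow_add h2π, show -(n:ℝ)/2 + (n:ℝ)/2 = 0 by ring, Real.rpow_zero]

lemma rho_measurable (n : ℕ) : Measurable fun x => ENNReal.ofReal (rho n x) :=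
  (rho_continuous n).measurable.ennreal_ofReal

instance (n : ℕ) : IsProbabilityMeasure (gaussianMeasure n) := by
  constructor
  rw [gaussianMeasure_eq, withDensity_apply _ MeasurableSet.univ, Measure.restrict_univ,
    ← ofReal_integral_eq_lintegral_ofReal (integrable_rho n)
      (Filter.Eventually.of_forall fun x => (rho_pos n x).le),
    integral_rho]
  simp

noncomputable def Kc (n : ℕ) : ℝ :=
  (2 * π) ^ (-(n : ℝ) / 2) * (4 / Real.exp 1) * (4 * π) ^ ((n : ℝ) / 2)

lemma Kc_pos (n : ℕ) : 0 < Kc n := by unfold Kc; positivity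

lemma aux_texp (t : ℝ) (ht : 0 ≤ t) :
    t * Real.exp (-t / 2) ≤ 4 / Real.exp 1 * Real.exp (-t / 4) := by
  have h1 : t / 4 - 1 + 1 ≤ Real.exp (t / 4 - 1) := Real.add_one_le_exp _
  have h2 : t * Real.exp (-t / 4) ≤ 4 / Real.exp 1 := by
    have h3 : t ≤ 4 * Real.exp (t / 4 - 1) := by linarith
    have h4 : t * Real.exp (-t / 4) ≤ 4 * Real.exp (t / 4 - 1) * Real.exp (-t / 4) := by
      exact mul_le_mul_of_nonneg_right h3 (Real.exp_pos _).le
    have h5 : Real.exp (t / 4 - 1) * Real.exp (-t / 4) = Real.exp (-1) := by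
      rw [← Real.exp_add]; ring_nf
    have h6 : Real.exp (-1) = 1 / Real.exp 1 := by
      rw [Real.exp_neg]; ring
    calc t * Real.exp (-t / 4) ≤ 4 * (Real.exp (t / 4 - 1) * Real.exp (-t / 4)) := by
          linarith [h4]
      _ = 4 / Real.exp 1 := by rw [h5, h6]; ring
  calc t * Real.exp (-t / 2) = t * Real.exp (-t / 4) * Real.exp (-t / 4) := by
        rw [mul_assoc, ← Real.exp_add]; ring_nf
    _ ≤ 4 / Real.exp 1 * Real.exp (-t / 4) :=
        mul_le_mul_of_nonneg_right h2 (Real.exp_pos _).le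

lemma moment_bound (n : ℕ) :
    ∫⁻ w, ENNReal.ofReal (‖w‖ ^ 2) ∂(gaussianMeasure n) ≤ ENNReal.ofReal (Kc n) := by
  rw [gaussianMeasure_eq,
    lintegral_withDensity_eq_lintegral_mul _ (rho_measurable n)
      (measurable_norm.pow_const 2).ennreal_ofReal]
  simp only [Pi.mul_apply]
  have hptwise : ∀ w : EuclideanSpace ℝ (Fin n),
      ENNReal.ofReal (rho n w) * ENNReal.ofReal (‖w‖ ^ 2)
        ≤ ENNReal.ofReal (((2*π) ^ (-(n:ℝ)/2) * (4 / Real.exp 1)) * Real.exp (-(1/4) * ‖w‖^2)) := by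
    intro w
    rw [← ENNReal.ofReal_mul (rho_pos n w).le]
    apply ENNReal.ofReal_le_ofReal
    have h := aux_texp (‖w‖^2) (by positivity)
    have hc : (0:ℝ) ≤ (2*π) ^ (-(n:ℝ)/2) := by positivity
    calc rho n w * ‖w‖^2 = (2*π) ^ (-(n:ℝ)/2) * (‖w‖^2 * Real.exp (-‖w‖^2/2)) := by
          unfold rho; ring
      _ ≤ (2*π) ^ (-(n:ℝ)/2) * (4 / Real.exp 1 * Real.exp (-‖w‖^2/4)) :=
          mul_le_mul_of_nonneg_left h hc
      _ = ((2*π) ^ (-(n:ℝ)/2) * (4 / Real.exp 1)) * Real.exp (-(1/4) * ‖w‖^2) := by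
          ring_nf
  calc ∫⁻ w, ENNReal.ofReal (rho n w) * ENNReal.ofReal (‖w‖ ^ 2)
        ≤ ∫⁻ w, ENNReal.ofReal (((2*π) ^ (-(n:ℝ)/2) * (4 / Real.exp 1))
            * Real.exp (-(1/4) * ‖w‖^2)) := lintegral_mono hptwise
    _ = ENNReal.ofReal (∫ w : EuclideanSpace ℝ (Fin n),
          ((2*π) ^ (-(n:ℝ)/2) * (4 / Real.exp 1)) * Real.exp (-(1/4) * ‖w‖^2)) := by
        rw [← ofReal_integral_eq_lintegral_ofReal
          (((integrable_exp_norm_sq n (b := 1/4) (by norm_num))).const_mul _)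
          (Filter.Eventually.of_forall fun x => by positivity)]
    _ ≤ ENNReal.ofReal (Kc n) := by
        apply ENNReal.ofReal_le_ofReal
        rw [MeasureTheory.integral_const_mul, integral_exp_norm_sq n (by norm_num)]
        unfold Kc
        rw [show π / (1/4 : ℝ) = 4 * π by ring]


variable {n : ℕ}
local notation "E" => EuclideanSpace ℝ (Fin n)

/-- product density -/
noncomputable def rho2 (n : ℕ) (p : EuclideanSpace ℝ (Fin n) × EuclideanSpace ℝ (Fin n)) : ℝ≥0∞ :=
  ENNReal.ofReal (rho n p.1) * ENNReal.ofReal (rho n p.2)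

lemma rho2_measurable (n : ℕ) : Measurable (rho2 n) :=
  ((rho_measurable n).comp measurable_fst).mul ((rho_measurable n).comp measurable_snd)

lemma prod_gaussian_eq (n : ℕ) :
    (gaussianMeasure n).prod (gaussianMeasure n)
      = (volume.prod volume).withDensity (rho2 n) := by
  refine Measure.prod_eq (μ := gaussianMeasure n) (ν := gaussianMeasure n) ?_
  intro s t hs ht
  rw [withDensity_apply _ (hs.prod ht)]
  have : ∀ p : EuclideanSpace ℝ (Fin n) × EuclideanSpace ℝ (Fin n), (s ×ˢ t).indicator (rho2 n) p
      = (s.indicator (fun x => ENNReal.ofReal (rho n x)) p.1)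
        * (t.indicator (fun x => ENNReal.ofReal (rho n x)) p.2) := by
    rintro ⟨x, y⟩
    by_cases hx : x ∈ s <;> by_cases hy : y ∈ t <;>
      simp [Set.indicator, hx, hy, rho2, Set.mem_prod]
  rw [← lintegral_indicator (hs.prod ht)]
  simp_rw [this]
  rw [lintegral_prod_mul ((rho_measurable n).indicator hs).aemeasurable
    ((rho_measurable n).indicator ht).aemeasurable,
    lintegral_indicator hs, lintegral_indicator ht,
    gaussianMeasure_eq, withDensity_apply _ hs, withDensity_apply _ ht]

/-- the rotation map as a linear map -/
noncomputable def rot (n : ℕ) (s c : ℝ) :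
    (EuclideanSpace ℝ (Fin n) × EuclideanSpace ℝ (Fin n)) →ₗ[ℝ]
      (EuclideanSpace ℝ (Fin n) × EuclideanSpace ℝ (Fin n)) :=
  LinearMap.prod
    (s • (LinearMap.fst ℝ _ _) + c • (LinearMap.snd ℝ _ _))
    (c • (LinearMap.fst ℝ _ _) - s • (LinearMap.snd ℝ _ _))

lemma rot_apply (s c : ℝ) (p : E × E) :
    rot n s c p = (s • p.1 + c • p.2, c • p.1 - s • p.2) := rfl

lemma rot_involutive {s c : ℝ} (h : s ^ 2 + c ^ 2 = 1) (p : E × E) :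
    rot n s c (rot n s c p) = p := by
  have h1 : s • (s • p.1 + c • p.2) + c • (c • p.1 - s • p.2) = p.1 := by
    ext i
    simp only [PiLp.add_apply, PiLp.sub_apply, PiLp.smul_apply, smul_eq_mul]
    linear_combination (p.1 i) * h
  have h2 : c • (s • p.1 + c • p.2) - s • (c • p.1 - s • p.2) = p.2 := by
    ext i
    simp only [PiLp.add_apply, PiLp.sub_apply, PiLp.smul_apply, smul_eq_mul]
    linear_combination (p.2 i) * h
  simp only [rot_apply]
  exact Prod.ext h1 h2

lemma rot_comp_self {s c : ℝ} (h : s ^ 2 + c ^ 2 = 1) :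
    (rot n s c).comp (rot n s c) = LinearMap.id := by
  apply LinearMap.ext
  intro p
  simpa using rot_involutive h p

lemma rot_det_abs {s c : ℝ} (h : s ^ 2 + c ^ 2 = 1) :
    |LinearMap.det (rot n s c)| = 1 := by
  have hd : LinearMap.det (rot n s c) * LinearMap.det (rot n s c) = 1 := by
    rw [← LinearMap.det_comp, rot_comp_self h, LinearMap.det_id]
  rcases mul_self_eq_one_iff.mp hd with h1 | h1 <;> rw [h1] <;> norm_num

lemma rot_det_ne_zero {s c : ℝ} (h : s ^ 2 + c ^ 2 = 1) :
    LinearMap.det (rot n s c) ≠ 0 := by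
  intro h0
  have := rot_det_abs (n := n) h
  rw [h0] at this
  norm_num at this

lemma map_rot_volume {s c : ℝ} (h : s ^ 2 + c ^ 2 = 1) :
    (volume.prod volume : Measure (EuclideanSpace ℝ (Fin n) × EuclideanSpace ℝ (Fin n))).map
      (rot n s c) = volume.prod volume := by
  haveI := Measure.prod.instIsAddHaarMeasure
    (volume : Measure (EuclideanSpace ℝ (Fin n))) (volume : Measure (EuclideanSpace ℝ (Fin n)))
  rw [Measure.map_linearMap_addHaar_eq_smul_addHaar _ (rot_det_ne_zero h)]
  rw [abs_inv, rot_det_abs h]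
  norm_num

lemma norm_rot_sq {s c : ℝ} (h : s ^ 2 + c ^ 2 = 1) (x y : E) :
    ‖s • x + c • y‖ ^ 2 + ‖c • x - s • y‖ ^ 2 = ‖x‖ ^ 2 + ‖y‖ ^ 2 := by
  have e1 := norm_add_sq_real (s • x) (c • y)
  have e2 := norm_sub_sq_real (c • x) (s • y)
  have i1 : (inner ℝ (s • x) (c • y) : ℝ) = s * c * (inner ℝ x y : ℝ) := by
    rw [real_inner_smul_left, real_inner_smul_right]; ring
  have i2 : (inner ℝ (c • x) (s • y) : ℝ) = s * c * (inner ℝ x y : ℝ) := by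
    rw [real_inner_smul_left, real_inner_smul_right]; ring
  have ns : ∀ (t : ℝ) (z : EuclideanSpace ℝ (Fin n)), ‖t • z‖ ^ 2 = t ^ 2 * ‖z‖ ^ 2 := by
    intro t z
    rw [norm_smul]
    simp [mul_pow, sq_abs]
  rw [e1, e2, i1, i2, ns, ns, ns, ns]
  linear_combination (‖x‖ ^ 2 + ‖y‖ ^ 2) * h

lemma rho_mul (n : ℕ) (a b : EuclideanSpace ℝ (Fin n)) :
    rho n a * rho n b
      = ((2 * π) ^ (-(n : ℝ) / 2)) ^ 2 * Real.exp (-(‖a‖ ^ 2 + ‖b‖ ^ 2) / 2) := by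
  unfold rho
  rw [show (2 * π) ^ (-(n:ℝ)/2) * Real.exp (-‖a‖ ^ 2 / 2) * ((2 * π) ^ (-(n:ℝ)/2)
    * Real.exp (-‖b‖ ^ 2 / 2)) = ((2 * π) ^ (-(n:ℝ)/2)) ^ 2
      * (Real.exp (-‖a‖ ^ 2 / 2) * Real.exp (-‖b‖ ^ 2 / 2)) by ring, ← Real.exp_add]
  ring_nf

lemma rho2_rot {s c : ℝ} (h : s ^ 2 + c ^ 2 = 1) (p : E × E) :
    rho2 n (rot n s c p) = rho2 n p := by
  unfold rho2
  rw [rot_apply]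
  rw [← ENNReal.ofReal_mul (rho_pos n _).le, ← ENNReal.ofReal_mul (rho_pos n _).le]
  rw [rho_mul, rho_mul, norm_rot_sq h]

lemma rot_measurable (s c : ℝ) : Measurable (rot n s c) :=
  (rot n s c).continuous_of_finiteDimensional.measurable

lemma rot_measurePreserving {s c : ℝ} (h : s ^ 2 + c ^ 2 = 1) :
    MeasurePreserving (rot n s c) ((gaussianMeasure n).prod (gaussianMeasure n))
      ((gaussianMeasure n).prod (gaussianMeasure n)) := by
  refine ⟨rot_measurable s c, ?_⟩
  rw [prod_gaussian_eq]
  ext A hA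
  rw [Measure.map_apply (rot_measurable s c) hA, withDensity_apply _ ((rot_measurable s c) hA),
    withDensity_apply _ hA, ← lintegral_indicator ((rot_measurable s c) hA),
    ← lintegral_indicator hA]
  have hind : ∀ p, (rot n s c ⁻¹' A).indicator (rho2 n) p = A.indicator (rho2 n) (rot n s c p) := by
    intro p
    by_cases hp : rot n s c p ∈ A <;>
      simp [Set.indicator, hp, rho2_rot h p]
  simp_rw [hind]
  rw [← lintegral_map ((rho2_measurable n).indicator hA) (rot_measurable s c),
    map_rot_volume h]

lemma cs_interval {T : ℝ} (hT : 0 < T) {g : ℝ → ℝ} (hg : Continuous g) :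
    (∫ θ in (0:ℝ)..T, g θ) ^ 2 ≤ T * ∫ θ in (0:ℝ)..T, g θ ^ 2 := by
  set I := ∫ θ in (0:ℝ)..T, g θ with hI
  have hgi : IntervalIntegrable g volume 0 T := hg.intervalIntegrable _ _
  have hg2 : IntervalIntegrable (fun θ => g θ ^ 2) volume 0 T :=
    (hg.pow 2).intervalIntegrable _ _
  have key : 0 ≤ ∫ θ in (0:ℝ)..T, (g θ - I / T) ^ 2 :=
    intervalIntegral.integral_nonneg hT.le (fun θ _ => sq_nonneg _)
  have expand : ∫ θ in (0:ℝ)..T, (g θ - I / T) ^ 2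
      = (∫ θ in (0:ℝ)..T, g θ ^ 2) - 2 * (I / T) * I + (I / T) ^ 2 * (T - 0) := by
    have hptw : ∀ θ : ℝ, (g θ - I / T) ^ 2
        = (g θ ^ 2 - 2 * (I / T) * g θ) + (I / T) ^ 2 := by intro θ; ring
    simp_rw [hptw]
    rw [intervalIntegral.integral_add (hg2.sub (hgi.const_mul _)) intervalIntegrable_const,
      intervalIntegral.integral_sub hg2 (hgi.const_mul _),
      intervalIntegral.integral_const_mul, intervalIntegral.integral_const]
    simp [smul_eq_mul, mul_comm]
    exact Or.inl hI.symm
  rw [expand] at key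
  have h3 : I ^ 2 / T ≤ ∫ θ in (0:ℝ)..T, g θ ^ 2 := by
    have : 2 * (I / T) * I - (I / T) ^ 2 * (T - 0) = I ^ 2 / T := by
      field_simp; ring
    linarith [key, this]
  calc I ^ 2 = I ^ 2 / T * T := by field_simp
    _ ≤ (∫ θ in (0:ℝ)..T, g θ ^ 2) * T := mul_le_mul_of_nonneg_right h3 hT.le
    _ = T * ∫ θ in (0:ℝ)..T, g θ ^ 2 := mul_comm _ _

lemma fderiv_apply_sq_le (u : EuclideanSpace ℝ (Fin n) → ℝ) (z w : EuclideanSpace ℝ (Fin n)) :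
    (fderiv ℝ u z w) ^ 2 ≤ ‖gradient u z‖ ^ 2 * ‖w‖ ^ 2 := by
  have h1 : |fderiv ℝ u z w| ≤ ‖fderiv ℝ u z‖ * ‖w‖ := by
    simpa using (fderiv ℝ u z).le_opNorm w
  have h2 : ‖gradient u z‖ = ‖fderiv ℝ u z‖ := by
    rw [gradient]
    exact LinearIsometryEquiv.norm_map _ _
  rw [h2]
  calc (fderiv ℝ u z w) ^ 2 = |fderiv ℝ u z w| ^ 2 := (sq_abs _).symm
    _ ≤ (‖fderiv ℝ u z‖ * ‖w‖) ^ 2 := by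
        apply pow_le_pow_left₀ (abs_nonneg _) h1
    _ = ‖fderiv ℝ u z‖ ^ 2 * ‖w‖ ^ 2 := by ring

lemma cont_z (x y : EuclideanSpace ℝ (Fin n)) :
    Continuous fun θ : ℝ => Real.sin θ • x + Real.cos θ • y :=
  (Real.continuous_sin.smul continuous_const).add (Real.continuous_cos.smul continuous_const)

lemma cont_w (x y : EuclideanSpace ℝ (Fin n)) :
    Continuous fun θ : ℝ => Real.cos θ • x - Real.sin θ • y :=
  (Real.continuous_cos.smul continuous_const).sub (Real.continuous_sin.smul continuous_const)

lemma key_pointwise {u : EuclideanSpace ℝ (Fin n) → ℝ} (hu : ContDiff ℝ (⊤ : ℕ∞) u)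
    (x y : EuclideanSpace ℝ (Fin n)) :
    (u x - u y) ^ 2 ≤ (π / 2) * ∫ θ in (0:ℝ)..(π / 2),
      (fderiv ℝ u (Real.sin θ • x + Real.cos θ • y) (Real.cos θ • x - Real.sin θ • y)) ^ 2 := by
  set g : ℝ → ℝ := fun θ =>
    fderiv ℝ u (Real.sin θ • x + Real.cos θ • y) (Real.cos θ • x - Real.sin θ • y) with hg
  have hgc : Continuous g := by
    exact isBoundedBilinearMap_apply.continuous.comp
      (((hu.continuous_fderiv (by simp)).comp (cont_z x y)).prodMk (cont_w x y))
  have hderiv : ∀ θ ∈ Set.uIcc (0:ℝ) (π / 2),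
      HasDerivAt (fun φ => u (Real.sin φ • x + Real.cos φ • y)) (g θ) θ := by
    intro θ _
    have hs : HasDerivAt (fun φ : ℝ => Real.sin φ • x) (Real.cos θ • x) θ :=
      (Real.hasDerivAt_sin θ).smul_const x
    have hc : HasDerivAt (fun φ : ℝ => Real.cos φ • y) ((-Real.sin θ) • y) θ :=
      (Real.hasDerivAt_cos θ).smul_const y
    have h1 : HasDerivAt (fun φ : ℝ => Real.sin φ • x + Real.cos φ • y)
        (Real.cos θ • x - Real.sin θ • y) θ := by
      exact (hs.add hc).congr_deriv (by rw [neg_smul, ← sub_eq_add_neg])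
    exact (((hu.differentiable (by simp)) _).hasFDerivAt).comp_hasDerivAt θ h1
  have hrepr : u x - u y = ∫ θ in (0:ℝ)..(π / 2), g θ := by
    rw [intervalIntegral.integral_eq_sub_of_hasDerivAt hderiv (hgc.intervalIntegrable _ _)]
    simp
  rw [hrepr]
  exact cs_interval (by positivity) hgc

end GPAux

open GPAux

set_option maxHeartbeats 1000000 in
/-- Gaussian Poincaré inequality on domains of Gaussian measure strictly less than one:
there is a constant `C_Ω > 0` with `∫_Ω u² dγ ≤ C_Ω ∫_Ω |∇u|² dγ` for all
`u ∈ H^1_0(Ω,γ)` (stated for smooth compactly supported functions in `Ω`,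
which are dense in `H^1_0(Ω,γ)`). -/
theorem gaussian_poincare (n : ℕ) (Ω : Set (EuclideanSpace ℝ (Fin n))) (hΩ : IsOpen Ω)
    (hγΩ : gaussianMeasure n Ω < 1) :
    ∃ C : ℝ, 0 < C ∧ ∀ u : EuclideanSpace ℝ (Fin n) → ℝ,
      ContDiff ℝ (⊤ : ℕ∞) u → HasCompactSupport u → tsupport u ⊆ Ω →
      ∫ x in Ω, u x ^ 2 ∂(gaussianMeasure n)
        ≤ C * ∫ x in Ω, ‖gradient u x‖ ^ 2 ∂(gaussianMeasure n) := by
  classical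
  set γ := gaussianMeasure n with hγ
  have hΩm : MeasurableSet Ω := hΩ.measurableSet
  have hcompl : 0 < γ Ωᶜ := by
    rw [measure_compl hΩm (measure_ne_top γ Ω), measure_univ]
    exact tsub_pos_of_lt hγΩ
  set β := (γ Ωᶜ).toReal with hβ
  have hβpos : 0 < β := ENNReal.toReal_pos hcompl.ne' (measure_ne_top γ _)
  refine ⟨(π / 2) ^ 2 * Kc n / β, by have := Kc_pos n; positivity, ?_⟩
  intro u hu hsupp hsub
  have hucont : Continuous u := hu.continuous
  -- vanishing off Ω
  have u0 : ∀ y ∉ Ω, u y = 0 := fun y hy =>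
    image_eq_zero_of_notMem_tsupport (fun h => hy (hsub h))
  have grad0 : ∀ x ∉ Ω, ‖gradient u x‖ ^ 2 = 0 := by
    intro x hx
    have hxt : x ∉ tsupport u := fun h => hx (hsub h)
    have : fderiv ℝ u x = 0 := by
      have hsub2 := support_fderiv_subset (𝕜 := ℝ) (f := u)
      by_contra h
      exact hxt (hsub2 (by simpa [Function.mem_support] using h))
    rw [gradient, this]
    simp
  -- reduce set integrals to full integrals
  rw [setIntegral_eq_integral_of_forall_compl_eq_zero
      (fun x hx => by rw [u0 x hx]; ring),
    setIntegral_eq_integral_of_forall_compl_eq_zero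
      (fun x hx => grad0 x hx)]
  -- gradient continuity
  have hgradcont : Continuous fun x => gradient u x := by
    simp only [gradient]
    exact (InnerProductSpace.toDual ℝ _).symm.continuous.comp (hu.continuous_fderiv (by simp))
  -- integrability
  have hu2 : Integrable (fun x => u x ^ 2) γ := by
    apply Continuous.integrable_of_hasCompactSupport (hucont.pow 2)
    have hcs : HasCompactSupport ((fun t : ℝ => t ^ 2) ∘ u) := hsupp.comp_left (by norm_num)
    exact hcs
  have hgrad2 : Integrable (fun x => ‖gradient u x‖ ^ 2) γ :=
    ((hgradcont.norm.pow 2)).integrable_of_hasCompactSupport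
      (by
        have hcs2 := ((hsupp.fderiv (𝕜 := ℝ)).comp_left
          (g := fun L : (EuclideanSpace ℝ (Fin n)) →L[ℝ] ℝ =>
            ‖(InnerProductSpace.toDual ℝ _).symm L‖ ^ 2) (by simp))
        exact hcs2)
  set B := ∫ x, u x ^ 2 ∂γ with hB
  set D := ∫ x, ‖gradient u x‖ ^ 2 ∂γ with hD
  have hBnn : 0 ≤ B := integral_nonneg fun x => sq_nonneg _
  have hDnn : 0 ≤ D := integral_nonneg fun x => sq_nonneg _
  have lB : ENNReal.ofReal B = ∫⁻ x, ENNReal.ofReal (u x ^ 2) ∂γ :=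
    ofReal_integral_eq_lintegral_ofReal hu2 (Filter.Eventually.of_forall fun x => sq_nonneg _)
  have lD : ENNReal.ofReal D = ∫⁻ x, ENNReal.ofReal (‖gradient u x‖ ^ 2) ∂γ :=
    ofReal_integral_eq_lintegral_ofReal hgrad2 (Filter.Eventually.of_forall fun x => sq_nonneg _)
  set μ2 := γ.prod γ with hμ2
  -- measurable bits
  have hUU : Measurable fun p : EuclideanSpace ℝ (Fin n) × EuclideanSpace ℝ (Fin n) =>
      ENNReal.ofReal ((u p.1 - u p.2) ^ 2) :=
    (((hucont.comp continuous_fst).sub (hucont.comp continuous_snd)).pow 2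
      ).measurable.ennreal_ofReal
  set T := π / 2 with hT
  have hTpos : 0 < T := by positivity
  have hGcont : Continuous fun q : ℝ × (EuclideanSpace ℝ (Fin n) × EuclideanSpace ℝ (Fin n)) =>
      fderiv ℝ u (Real.sin q.1 • q.2.1 + Real.cos q.1 • q.2.2)
        (Real.cos q.1 • q.2.1 - Real.sin q.1 • q.2.2) := by
    have hz : Continuous fun q : ℝ × (EuclideanSpace ℝ (Fin n) × EuclideanSpace ℝ (Fin n)) =>
        Real.sin q.1 • q.2.1 + Real.cos q.1 • q.2.2 :=
      ((Real.continuous_sin.comp continuous_fst).smul (continuous_fst.comp continuous_snd)).add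
        ((Real.continuous_cos.comp continuous_fst).smul (continuous_snd.comp continuous_snd))
    have hw : Continuous fun q : ℝ × (EuclideanSpace ℝ (Fin n) × EuclideanSpace ℝ (Fin n)) =>
        Real.cos q.1 • q.2.1 - Real.sin q.1 • q.2.2 :=
      ((Real.continuous_cos.comp continuous_fst).smul (continuous_fst.comp continuous_snd)).sub
        ((Real.continuous_sin.comp continuous_fst).smul (continuous_snd.comp continuous_snd))
    exact isBoundedBilinearMap_apply.continuous.comp
      (((hu.continuous_fderiv (by simp)).comp hz).prodMk hw)
  set G2 : ℝ × (EuclideanSpace ℝ (Fin n) × EuclideanSpace ℝ (Fin n)) → ℝ≥0∞ := fun q =>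
    ENNReal.ofReal ((fderiv ℝ u (Real.sin q.1 • q.2.1 + Real.cos q.1 • q.2.2)
      (Real.cos q.1 • q.2.1 - Real.sin q.1 • q.2.2)) ^ 2) with hG2
  have hG2meas : Measurable G2 := ((hGcont.pow 2)).measurable.ennreal_ofReal
  set F : EuclideanSpace ℝ (Fin n) × EuclideanSpace ℝ (Fin n) → ℝ≥0∞ := fun q =>
    ENNReal.ofReal ((fderiv ℝ u q.1 q.2) ^ 2) with hF
  have hFcont : Continuous fun q : EuclideanSpace ℝ (Fin n) × EuclideanSpace ℝ (Fin n) =>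
      fderiv ℝ u q.1 q.2 :=
    isBoundedBilinearMap_apply.continuous.comp
      (((hu.continuous_fderiv (by simp)).comp continuous_fst).prodMk continuous_snd)
  have hFmeas : Measurable F := ((hFcont.pow 2)).measurable.ennreal_ofReal
  -- Step A1
  have A1 : ENNReal.ofReal B * γ Ωᶜ ≤ ∫⁻ p, ENNReal.ofReal ((u p.1 - u p.2) ^ 2) ∂μ2 := by
    rw [hμ2, lintegral_prod _ hUU.aemeasurable]
    have inner : ∀ x, ENNReal.ofReal (u x ^ 2) * γ Ωᶜ
        ≤ ∫⁻ y, ENNReal.ofReal ((u x - u y) ^ 2) ∂γ := by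
      intro x
      have e0 : ∫⁻ y in Ωᶜ, ENNReal.ofReal ((u x - u y) ^ 2) ∂γ
          = ∫⁻ _ in Ωᶜ, ENNReal.ofReal (u x ^ 2) ∂γ :=
        setLIntegral_congr_fun hΩm.compl (fun y hy => by
          rw [u0 y hy]; norm_num)
      rw [← e0.trans (setLIntegral_const _ _)]
      exact setLIntegral_le_lintegral _ _
    calc ENNReal.ofReal B * γ Ωᶜ
        = ∫⁻ x, ENNReal.ofReal (u x ^ 2) * γ Ωᶜ ∂γ := by
          rw [lintegral_mul_const (f := fun x => ENNReal.ofReal (u x ^ 2)) _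
              (hucont.pow 2).measurable.ennreal_ofReal, ← lB]
      _ ≤ _ := lintegral_mono inner
  -- Step A2 : pointwise bound
  have A2 : ∀ p : EuclideanSpace ℝ (Fin n) × EuclideanSpace ℝ (Fin n),
      ENNReal.ofReal ((u p.1 - u p.2) ^ 2)
        ≤ ENNReal.ofReal T * ∫⁻ θ in Set.Ioc (0:ℝ) T, G2 (θ, p) ∂volume := by
    intro p
    have h9 := key_pointwise hu p.1 p.2
    have hIoc : IntegrableOn (fun θ : ℝ =>
        (fderiv ℝ u (Real.sin θ • p.1 + Real.cos θ • p.2)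
          (Real.cos θ • p.1 - Real.sin θ • p.2)) ^ 2) (Set.Ioc 0 T) volume := by
      have : Continuous fun θ : ℝ =>
          (fderiv ℝ u (Real.sin θ • p.1 + Real.cos θ • p.2)
            (Real.cos θ • p.1 - Real.sin θ • p.2)) ^ 2 :=
        (hGcont.comp (continuous_id.prodMk continuous_const)).pow 2
      exact this.integrableOn_Ioc
    calc ENNReal.ofReal ((u p.1 - u p.2) ^ 2)
        ≤ ENNReal.ofReal (T * ∫ θ in (0:ℝ)..T, (fderiv ℝ u
            (Real.sin θ • p.1 + Real.cos θ • p.2)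
            (Real.cos θ • p.1 - Real.sin θ • p.2)) ^ 2) := ENNReal.ofReal_le_ofReal h9
      _ = ENNReal.ofReal T * ENNReal.ofReal (∫ θ in (0:ℝ)..T, (fderiv ℝ u
            (Real.sin θ • p.1 + Real.cos θ • p.2)
            (Real.cos θ • p.1 - Real.sin θ • p.2)) ^ 2) := ENNReal.ofReal_mul hTpos.le
      _ = ENNReal.ofReal T * ∫⁻ θ in Set.Ioc (0:ℝ) T, G2 (θ, p) ∂volume := by
          congr 1
          rw [intervalIntegral.integral_of_le hTpos.le,
            ofReal_integral_eq_lintegral_ofReal hIoc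
              (Filter.Eventually.of_forall fun θ => sq_nonneg _)]
  -- Step A3 : integrate & swap
  have A3 : ∫⁻ p, ENNReal.ofReal ((u p.1 - u p.2) ^ 2) ∂μ2
      ≤ ENNReal.ofReal T * ∫⁻ θ in Set.Ioc (0:ℝ) T, (∫⁻ p, G2 (θ, p) ∂μ2) ∂volume := by
    have hswap : ∫⁻ p, ∫⁻ θ in Set.Ioc (0:ℝ) T, G2 (θ, p) ∂volume ∂μ2
        = ∫⁻ θ in Set.Ioc (0:ℝ) T, ∫⁻ p, G2 (θ, p) ∂μ2 ∂volume := by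
      apply lintegral_lintegral_swap
      exact (hG2meas.comp measurable_swap).aemeasurable
    calc ∫⁻ p, ENNReal.ofReal ((u p.1 - u p.2) ^ 2) ∂μ2
        ≤ ∫⁻ p, ENNReal.ofReal T * ∫⁻ θ in Set.Ioc (0:ℝ) T, G2 (θ, p) ∂volume ∂μ2 :=
          lintegral_mono A2
      _ = ENNReal.ofReal T * ∫⁻ p, ∫⁻ θ in Set.Ioc (0:ℝ) T, G2 (θ, p) ∂volume ∂μ2 := by
          apply lintegral_const_mul
          exact Measurable.lintegral_prod_right'
            (f := fun z : (EuclideanSpace ℝ (Fin n) × EuclideanSpace ℝ (Fin n)) × ℝ =>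
              G2 (z.2, z.1)) (hG2meas.comp measurable_swap)
      _ = ENNReal.ofReal T * ∫⁻ θ in Set.Ioc (0:ℝ) T, ∫⁻ p, G2 (θ, p) ∂μ2 ∂volume := by
          rw [hswap]
  -- Step A4 : rotation invariance + product bound, for each θ
  have A4 : ∀ θ : ℝ, ∫⁻ p, G2 (θ, p) ∂μ2 ≤ ENNReal.ofReal D * ENNReal.ofReal (Kc n) := by
    intro θ
    have hrot := rot_measurePreserving (n := n) (s := Real.sin θ) (c := Real.cos θ)
      (by rw [Real.sin_sq_add_cos_sq])
    have hcomp : ∀ p, G2 (θ, p) = F (rot n (Real.sin θ) (Real.cos θ) p) := by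
      intro p
      rw [hG2, hF, rot_apply]
    have e1 : ∫⁻ p, G2 (θ, p) ∂μ2 = ∫⁻ q, F q ∂μ2 := by
      simp_rw [hcomp]
      exact hrot.lintegral_comp hFmeas
    rw [e1]
    calc ∫⁻ q, F q ∂μ2
        ≤ ∫⁻ q, ENNReal.ofReal (‖gradient u q.1‖ ^ 2) * ENNReal.ofReal (‖q.2‖ ^ 2) ∂μ2 := by
          apply lintegral_mono
          intro q
          show ENNReal.ofReal ((fderiv ℝ u q.1) q.2 ^ 2)
            ≤ ENNReal.ofReal (‖gradient u q.1‖ ^ 2) * ENNReal.ofReal (‖q.2‖ ^ 2)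
          rw [← ENNReal.ofReal_mul (sq_nonneg _)]
          exact ENNReal.ofReal_le_ofReal (fderiv_apply_sq_le u q.1 q.2)
      _ = (∫⁻ z, ENNReal.ofReal (‖gradient u z‖ ^ 2) ∂γ)
            * ∫⁻ w, ENNReal.ofReal (‖w‖ ^ 2) ∂γ := by
          rw [hμ2]
          exact lintegral_prod_mul
            ((hgradcont.norm.pow 2).measurable.ennreal_ofReal).aemeasurable
            ((continuous_norm.pow 2).measurable.ennreal_ofReal).aemeasurable
      _ ≤ ENNReal.ofReal D * ENNReal.ofReal (Kc n) :=
          mul_le_mul' (le_of_eq lD.symm) (moment_bound n)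
  -- Step A5
  have A5 : ∫⁻ θ in Set.Ioc (0:ℝ) T, (∫⁻ p, G2 (θ, p) ∂μ2) ∂volume
      ≤ ENNReal.ofReal T * (ENNReal.ofReal D * ENNReal.ofReal (Kc n)) := by
    calc ∫⁻ θ in Set.Ioc (0:ℝ) T, (∫⁻ p, G2 (θ, p) ∂μ2) ∂volume
        ≤ ∫⁻ _ in Set.Ioc (0:ℝ) T, (ENNReal.ofReal D * ENNReal.ofReal (Kc n)) ∂volume :=
          setLIntegral_mono measurable_const (fun θ _ => A4 θ)
      _ = (ENNReal.ofReal D * ENNReal.ofReal (Kc n)) * volume (Set.Ioc (0:ℝ) T) :=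
          setLIntegral_const _ _
      _ = ENNReal.ofReal T * (ENNReal.ofReal D * ENNReal.ofReal (Kc n)) := by
          rw [Real.volume_Ioc]
          rw [show T - 0 = T by ring]
          ring
  -- total chain
  have total : ENNReal.ofReal B * γ Ωᶜ
      ≤ ENNReal.ofReal T * (ENNReal.ofReal T * (ENNReal.ofReal D * ENNReal.ofReal (Kc n))) :=
    le_trans A1 (le_trans A3 (mul_le_mul' le_rfl A5))
  -- convert to ℝ
  have hRHSne : ENNReal.ofReal T * (ENNReal.ofReal T * (ENNReal.ofReal D
      * ENNReal.ofReal (Kc n))) ≠ ⊤ := by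
    finiteness
  have treal := ENNReal.toReal_mono hRHSne total
  rw [ENNReal.toReal_mul, ENNReal.toReal_mul, ENNReal.toReal_mul, ENNReal.toReal_mul,
    ENNReal.toReal_ofReal hBnn, ENNReal.toReal_ofReal hTpos.le,
    ENNReal.toReal_ofReal hDnn, ENNReal.toReal_ofReal (Kc_pos n).le] at treal
  have hfinal : B ≤ (π / 2) ^ 2 * Kc n / β * D := by
    rw [div_mul_eq_mul_div, le_div_iff₀ hβpos]
    calc B * β ≤ T * (T * (D * Kc n)) := treal
      _ = (π / 2) ^ 2 * Kc n * D := by rw [hT]; ring_nf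
  exact hfinal
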